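/- With the operators of the type-B₂ positive representation for w₀ = s₁s₂s₁s₂ defined in the context, the quantum Serre relations hold for the f-generators, as identities of operators on the space of all functions ℂ⁴ → ℂ: f₁³f₂ − [3]_{q_s} f₁²f₂f₁ + [3]_{q_s} f₁f₂f₁² − f₂f₁³ = 0 and f₂²f₁ − [2]_q f₂f₁f₂ + f₁f₂² = 0, where [2]_q = q + q⁻¹ and [3]_{q_s} = q_s² + 1 + q_s⁻². -/
import Mathlib


noncomputable section

open Complex

/-- The space of operators on all functions `ℂ⁴ → ℂ`. -/
abbrev OpB : Type := Module.End ℂ ((Fin 4 → ℂ) → ℂ)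

/-- Weyl operator `W(ℓ,δ)`: `(W(ℓ,δ) f)(x) = exp(ℓ(x + δ/2)) · f(x + δ)`. -/
def Wop (ℓ : (Fin 4 → ℂ) → ℂ) (δ : Fin 4 → ℂ) : OpB where
  toFun f := fun x => Complex.exp (ℓ (x + (2 : ℂ)⁻¹ • δ)) * f (x + δ)
  map_add' f g := by funext x; simp [mul_add]
  map_smul' c f := by funext x; simp [smul_eq_mul]; ring

/-- `b_s = b/√2`. -/
def bs (b : ℝ) : ℝ := b / Real.sqrt 2

/-- `q = exp(π i b²)`. -/
def qq (b : ℝ) : ℂ := Complex.exp ((Real.pi : ℂ) * Complex.I * (b : ℂ) ^ 2)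

/-- `q_s = exp(π i b_s²)`. -/
def qs (b : ℝ) : ℂ := Complex.exp ((Real.pi : ℂ) * Complex.I * ((bs b : ℝ) : ℂ) ^ 2)

/-- The affine functional `ℓ_α = π (b_s (ct·t + cv·v + cl1·λ₁) + b (cu·u + cw·w + cl2·λ₂))`,
where `(t,u,v,w) = (x 0, x 1, x 2, x 3)`. -/
def ellB (b lam1 lam2 ct cu cv cw cl1 cl2 : ℝ) : (Fin 4 → ℂ) → ℂ := fun x =>
  (Real.pi : ℂ) * (((bs b : ℝ) : ℂ) * (ct * x 0 + cv * x 2 + cl1 * lam1)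
    + (b : ℂ) * (cu * x 1 + cw * x 3 + cl2 * lam2))

/-- The shift vector `δ = (−i b_s d_t, −i b d_u, −i b_s d_v, −i b d_w)`. -/
def deltaB (b dt du dv dw : ℝ) : Fin 4 → ℂ :=
  ![-Complex.I * ((bs b : ℝ) : ℂ) * dt, -Complex.I * (b : ℂ) * du,
    -Complex.I * ((bs b : ℝ) : ℂ) * dv, -Complex.I * (b : ℂ) * dw]

/-- The operator `[α]e(d_t p_t + d_u p_u + d_v p_v + d_w p_w) = W(ℓ_α,δ) + W(−ℓ_α,δ)`. -/
def brB (b lam1 lam2 ct cu cv cw cl1 cl2 dt du dv dw : ℝ) : OpB :=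
  Wop (ellB b lam1 lam2 ct cu cv cw cl1 cl2) (deltaB b dt du dv dw)
    + Wop (fun x => -(ellB b lam1 lam2 ct cu cv cw cl1 cl2 x)) (deltaB b dt du dv dw)

/-- `K₁ = W(π(b_s(2λ₁−2t−2v) + b(u+w)), 0)`. -/
def K1 (b lam1 lam2 : ℝ) : OpB := Wop (ellB b lam1 lam2 (-2) 1 (-2) 1 2 0) 0

/-- `K₁⁻¹`, the multiplication operator with negated exponent. -/
def K1inv (b lam1 lam2 : ℝ) : OpB := Wop (ellB b lam1 lam2 2 (-1) 2 (-1) (-2) 0) 0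

/-- `K₂ = W(π(b(2λ₂−2u−2w) + b_s(2t+2v)), 0)`. -/
def K2 (b lam1 lam2 : ℝ) : OpB := Wop (ellB b lam1 lam2 2 (-2) 2 (-2) 0 2) 0

/-- `K₂⁻¹`, the multiplication operator with negated exponent. -/
def K2inv (b lam1 lam2 : ℝ) : OpB := Wop (ellB b lam1 lam2 (-2) 2 (-2) 2 0 (-2)) 0

/-- `e₁ = [t]e(−p_t−p_u+p_w) + [u−v]e(−p_u−p_v+p_w) + [v−w]e(−p_v)`. -/
def e1 (b lam1 lam2 : ℝ) : OpB :=
  brB b lam1 lam2 1 0 0 0 0 0 (-1) (-1) 0 1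
    + brB b lam1 lam2 0 1 (-1) 0 0 0 0 (-1) (-1) 1
    + brB b lam1 lam2 0 0 1 (-1) 0 0 0 0 (-1) 0

/-- `e₂ = [w]e(−p_w)`. -/
def e2 (b lam1 lam2 : ℝ) : OpB := brB b lam1 lam2 0 0 0 1 0 0 0 0 0 (-1)

/-- `f₁ = [2λ₁−t]e(p_t) + [2λ₁−2t+u−v]e(p_v)`. -/
def f1 (b lam1 lam2 : ℝ) : OpB :=
  brB b lam1 lam2 (-1) 0 0 0 2 0 1 0 0 0
    + brB b lam1 lam2 (-2) 1 (-1) 0 2 0 0 0 1 0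

/-- `f₂ = [2λ₂+2t−u]e(p_u) + [2λ₂+2t−2u+2v−w]e(p_w)`. -/
def f2 (b lam1 lam2 : ℝ) : OpB :=
  brB b lam1 lam2 2 (-1) 0 0 0 2 0 1 0 0
    + brB b lam1 lam2 2 (-2) 2 (-1) 0 2 0 0 0 1

/-- the quantum Serre relations for the `f`-generators of the type-B₂
positive representation corresponding to `w₀ = s₁s₂s₁s₂`. -/

def U (b lam1 lam2 c1 c2 c3 c4 c5 c6 d1 d2 d3 d4 : ℝ) : OpB :=
  Wop (ellB b lam1 lam2 c1 c2 c3 c4 c5 c6) (deltaB b d1 d2 d3 d4)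

lemma deltaB_add (b d1 d2 d3 d4 g1 g2 g3 g4 : ℝ) :
    deltaB b (d1+g1) (d2+g2) (d3+g3) (d4+g4) = deltaB b d1 d2 d3 d4 + deltaB b g1 g2 g3 g4 := by
  funext i
  fin_cases i <;> simp [deltaB] <;> push_cast <;> ring

lemma hbs2 (b : ℝ) : ((bs b : ℝ) : ℂ)^2 = (b : ℂ)^2 / 2 := by
  have h : Real.sqrt 2 ^ 2 = 2 := Real.sq_sqrt (by norm_num)
  have h2 : ((Real.sqrt 2 : ℝ) : ℂ)^2 = 2 := by
    rw [← Complex.ofReal_pow, h]; norm_num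
  rw [bs]; push_cast
  rw [div_pow, h2]

lemma U_mul (b lam1 lam2 c1 c2 c3 c4 c5 c6 d1 d2 d3 d4 e1 e2 e3 e4 e5 e6 g1 g2 g3 g4 : ℝ) :
    U b lam1 lam2 c1 c2 c3 c4 c5 c6 d1 d2 d3 d4 * U b lam1 lam2 e1 e2 e3 e4 e5 e6 g1 g2 g3 g4
    = Complex.exp ((Real.pi : ℂ) * Complex.I * (b : ℂ)^2 *
        ((((c1:ℂ)*g1 + (c3:ℂ)*g3) - ((e1:ℂ)*d1 + (e3:ℂ)*d3))/4
          + (((c2:ℂ)*g2 + (c4:ℂ)*g4) - ((e2:ℂ)*d2 + (e4:ℂ)*d4))/2))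
      • U b lam1 lam2 (c1+e1) (c2+e2) (c3+e3) (c4+e4) (c5+e5) (c6+e6) (d1+g1) (d2+g2) (d3+g3) (d4+g4) := by
  apply LinearMap.ext; intro f
  funext x
  rw [U, U, U]
  show Complex.exp _ * (Complex.exp _ * f _) = _ * (Complex.exp _ * f _)
  rw [deltaB_add]
  rw [show x + (deltaB b d1 d2 d3 d4 + deltaB b g1 g2 g3 g4)
      = x + deltaB b d1 d2 d3 d4 + deltaB b g1 g2 g3 g4 from (add_assoc ..).symm]
  rw [← mul_assoc, ← Complex.exp_add, ← mul_assoc, ← Complex.exp_add]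
  congr 1
  simp only [ellB, deltaB, Pi.add_apply, Pi.smul_apply, Matrix.cons_val_zero,
    Matrix.cons_val_one, Matrix.head_cons, Matrix.cons_val_two, Matrix.tail_cons,
    Matrix.cons_val_three, smul_eq_mul]
  push_cast
  congr 1
  linear_combination ((Real.pi : ℂ) * Complex.I *
    (((c1:ℂ)*g1 + (c3:ℂ)*g3) - ((e1:ℂ)*d1 + (e3:ℂ)*d3)) / 2) * hbs2 b

lemma ellB_neg (b lam1 lam2 c1 c2 c3 c4 c5 c6 : ℝ) :
    (fun x => -(ellB b lam1 lam2 c1 c2 c3 c4 c5 c6 x))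
      = ellB b lam1 lam2 (-c1) (-c2) (-c3) (-c4) (-c5) (-c6) := by
  funext x; simp only [ellB]; push_cast; ring

lemma brB_eq (b lam1 lam2 c1 c2 c3 c4 c5 c6 d1 d2 d3 d4 : ℝ) :
    brB b lam1 lam2 c1 c2 c3 c4 c5 c6 d1 d2 d3 d4
      = U b lam1 lam2 c1 c2 c3 c4 c5 c6 d1 d2 d3 d4
        + U b lam1 lam2 (-c1) (-c2) (-c3) (-c4) (-c5) (-c6) d1 d2 d3 d4 := by
  rw [brB, ellB_neg]; rfl

lemma hf1 (b lam1 lam2 : ℝ) : f1 b lam1 lam2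
    = U b lam1 lam2 (-1) 0 0 0 2 0 1 0 0 0 + U b lam1 lam2 1 0 0 0 (-2) 0 1 0 0 0
    + (U b lam1 lam2 (-2) 1 (-1) 0 2 0 0 0 1 0 + U b lam1 lam2 2 (-1) 1 0 (-2) 0 0 0 1 0) := by
  rw [f1, brB_eq, brB_eq]; norm_num

lemma hf2 (b lam1 lam2 : ℝ) : f2 b lam1 lam2
    = U b lam1 lam2 2 (-1) 0 0 0 2 0 1 0 0 + U b lam1 lam2 (-2) 1 0 0 0 (-2) 0 1 0 0
    + (U b lam1 lam2 2 (-2) 2 (-1) 0 2 0 0 0 1 + U b lam1 lam2 (-2) 2 (-2) 1 0 (-2) 0 0 0 1) := by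
  rw [f2, brB_eq, brB_eq]; norm_num

lemma hqq (b : ℝ) : qq b = Complex.exp ((Real.pi:ℂ) * Complex.I * (b:ℂ)^2 * 1) := by
  rw [qq]; ring_nf

lemma hqqinv (b : ℝ) : (qq b)⁻¹ = Complex.exp ((Real.pi:ℂ) * Complex.I * (b:ℂ)^2 * (-1)) := by
  rw [qq, ← Complex.exp_neg]; ring_nf

lemma hqs2 (b : ℝ) : (qs b)^2 = Complex.exp ((Real.pi:ℂ) * Complex.I * (b:ℂ)^2 * 1) := by
  rw [qs, ← Complex.exp_nat_mul]
  congr 1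
  push_cast
  linear_combination (2 * (Real.pi:ℂ) * Complex.I) * hbs2 b

lemma hqsinv2 (b : ℝ) : ((qs b)⁻¹)^2 = Complex.exp ((Real.pi:ℂ) * Complex.I * (b:ℂ)^2 * (-1)) := by
  rw [inv_pow, hqs2, ← Complex.exp_neg]
  ring_nf

set_option maxHeartbeats 12000000 in
theorem B2_Serre_f (b lam1 lam2 : ℝ) (hb0 : 0 < b) (hb1 : b < 1)
    (hirr : Irrational (b ^ 2)) :
    f1 b lam1 lam2 ^ 3 * f2 b lam1 lam2
      - ((qs b) ^ 2 + 1 + ((qs b)⁻¹) ^ 2) • (f1 b lam1 lam2 ^ 2 * f2 b lam1 lam2 * f1 b lam1 lam2)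
      + ((qs b) ^ 2 + 1 + ((qs b)⁻¹) ^ 2) • (f1 b lam1 lam2 * f2 b lam1 lam2 * f1 b lam1 lam2 ^ 2)
      - f2 b lam1 lam2 * f1 b lam1 lam2 ^ 3 = 0 ∧
    f2 b lam1 lam2 ^ 2 * f1 b lam1 lam2
      - (qq b + (qq b)⁻¹) • (f2 b lam1 lam2 * f1 b lam1 lam2 * f2 b lam1 lam2)
      + f1 b lam1 lam2 * f2 b lam1 lam2 ^ 2 = 0 := by
  constructor
  · rw [hqs2, hqsinv2]
    simp only [pow_succ, pow_zero, one_mul, hf1, hf2, add_mul, mul_add, U_mul, smul_mul_assoc,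
      mul_smul_comm, smul_smul, add_smul, one_smul, smul_add, ← Complex.exp_add]
    norm_num
    match_scalars <;> (ring_nf; try norm_num [Complex.exp_zero])
  · rw [hqqinv, hqq]
    simp only [pow_two, hf1, hf2, add_mul, mul_add, U_mul, smul_mul_assoc, mul_smul_comm,
      smul_smul, add_smul, one_smul, smul_add, ← Complex.exp_add]
    norm_num
    match_scalars <;> (ring_nf; try norm_num [Complex.exp_zero])


end
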